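/- arXiv:1601.00351 — 4 statements merged into one kernel-verified Lean document; each statement's English description precedes it below -/
import Mathlib

section
/- Let H be a finite set of positive integers and let H_rel be the set of elements h ∈ H that are coprime to every other element of H. Then 1 − d(M(H)) = (1 − d(M(H \ H_rel))) · ∏_{h ∈ H_rel} (1 − 1/h), where M(S) denotes the set of positive integers divisible by some element of S and d denotes asymptotic density. -/
open Filter

/-- The number of elements of `S` lying in `[1, x]`. -/
noncomputable def countIn (S : Set ℕ) (x : ℕ) : ℕ := (S ∩ Set.Icc 1 x).ncard

/-- `S` has asymptotic density `δ`. -/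
def HasDensity (S : Set ℕ) (δ : ℝ) : Prop :=
  Tendsto (fun x : ℕ => (countIn S x : ℝ) / x) atTop (nhds δ)

/-- The upper asymptotic density of `S`. -/
noncomputable def upperDensity (S : Set ℕ) : ℝ :=
  limsup (fun x : ℕ => (countIn S x : ℝ) / x) atTop

/-- The set of multiples of a finite set `H` of positive integers. -/
def setOfMultiples (H : Finset ℕ) : Set ℕ := {n : ℕ | 0 < n ∧ ∃ h ∈ H, h ∣ n}

/-!
Membership in `M(S)` is periodic modulo any common multiple `L` of `S`, so `M(S)` has density
`1 - ρ`, where `ρ` is the proportion of `n < L` having no divisor in `S`. If `h` is coprime to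
`L`, then the `n < hL` without divisor in `S` number `h · ρL`, and those among them divisible by
`h` are the `hk` with `k < L` and no divisor of `k` in `S` (a divisor of `L` is coprime to `h`),
of which there are `ρL`. So adding `h` to `S` multiplies `ρ` by `1 - 1/h`, and adding the
elements of `H_rel` one at a time to `H \ H_rel` gives the formula.
-/

open Topology Function

theorem tendsto_div_natCast_of_abs_sub_mul_le {f : ℕ → ℝ} {c B : ℝ}
    (h : ∀ x : ℕ, |f x - c * x| ≤ B) : Tendsto (fun x : ℕ => f x / x) atTop (𝓝 c) := by
  rw [← tendsto_sub_nhds_zero_iff]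
  refine squeeze_zero_norm' ?_ (tendsto_const_div_atTop_nhds_zero_nat B)
  filter_upwards [eventually_gt_atTop 0] with x hx
  have hx' : (0 : ℝ) < x := Nat.cast_pos.mpr hx
  rw [Real.norm_eq_abs, div_sub' hx'.ne', abs_div, abs_of_pos hx', mul_comm (x : ℝ)]
  exact div_le_div_of_nonneg_right (h x) hx'.le

namespace Nat

variable {p : ℕ → Prop} [DecidablePred p] {a : ℕ}

theorem count_and_add_count_not_and (q : ℕ → Prop) [DecidablePred q] (n : ℕ) :
    count (fun k => q k ∧ p k) n + count (fun k => ¬ q k ∧ p k) n = count p n := by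
  induction n with
  | zero => simp
  | succ n ih =>
    by_cases hq : q n <;> by_cases hp : p n <;> simp [count_succ, hq, hp, ← ih] <;> omega

theorem count_add_count_not (n : ℕ) : count p n + count (fun k => ¬ p k) n = n := by
  simpa using count_and_add_count_not_and (p := fun _ => True) p n

theorem count_add_period (hp : Periodic p a) (x : ℕ) :
    count p (x + a) = count p x + count p a := by
  induction x with
  | zero => simp
  | succ x ih => simp only [add_right_comm x 1 a, count_succ, ih, hp x]; ring

theorem count_add_mul_period (hp : Periodic p a) (r k : ℕ) :
    count p (r + k * a) = count p r + k * count p a := by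
  induction k with
  | zero => simp
  | succ k ih => rw [add_mul, one_mul, ← add_assoc, count_add_period hp, ih]; ring

theorem abs_count_sub_le (ha : 0 < a) (hp : Periodic p a) (x : ℕ) :
    |(count p x : ℝ) - count p a / a * x| ≤ a := by
  have hx : (x : ℝ) = (x % a : ℕ) + (x / a : ℕ) * a := by
    exact_mod_cast (mod_add_div' x a).symm
  have hcount : (count p x : ℝ) = count p (x % a) + (x / a : ℕ) * count p a := by
    exact_mod_cast (mod_add_div' x a) ▸ count_add_mul_period hp (x % a) (x / a)
  have ha' : (0 : ℝ) < a := cast_pos.mpr ha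
  have hr : ((x % a : ℕ) : ℝ) < a := by exact_mod_cast mod_lt x ha
  have hca : (count p a : ℝ) / a ≤ 1 :=
    div_le_one_of_le₀ (by exact_mod_cast count_le p) ha'.le
  have hreduce : (count p x : ℝ) - count p a / a * x
      = count p (x % a) - count p a / a * (x % a : ℕ) := by
    rw [hcount, hx]; field_simp; ring
  rw [hreduce]
  refine (abs_sub_lt_of_nonneg_of_lt (cast_nonneg _) ?_ (by positivity) ?_).le
  · exact (cast_le.mpr (count_le p)).trans_lt hr
  · exact (mul_le_of_le_one_left (cast_nonneg _) hca).trans_lt hr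

theorem tendsto_count_div_atTop (ha : 0 < a) (hp : Periodic p a) :
    Tendsto (fun x : ℕ => (count p x : ℝ) / x) atTop (𝓝 (count p a / a)) :=
  tendsto_div_natCast_of_abs_sub_mul_le (abs_count_sub_le ha hp)

theorem count_dvd_and_mul {h : ℕ} (hh : 0 < h) (m : ℕ) :
    count (fun n => h ∣ n ∧ p n) (h * m) = count (fun k => p (h * k)) m := by
  simp only [count_eq_card_filter_range]
  symm
  refine Finset.card_nbij (h * ·) ?_ ?_ ?_
  · intro k hk
    simp_all
  · intro k _ k' _ hkk'
    exact Nat.eq_of_mul_eq_mul_left hh hkk'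
  · rintro n hn
    simp only [Finset.coe_filter, Finset.mem_range, Set.mem_ofPred_eq] at hn
    obtain ⟨hn, ⟨k, rfl⟩, hpk⟩ := hn
    exact ⟨k, by simp_all [Nat.mul_lt_mul_left hh]⟩

end Nat

theorem countIn_eq_count (p : ℕ → Prop) [DecidablePred p] (x : ℕ) :
    countIn {n | 0 < n ∧ p n} x = Nat.count (fun k => p (k + 1)) x := by
  have hset : {n | 0 < n ∧ p n} ∩ Set.Icc 1 x = (· + 1) '' {k | k < x ∧ p (k + 1)} := by
    ext n
    cases n <;> simp [and_comm]
  rw [countIn, hset, Set.ncard_image_of_injective _ (add_left_injective 1),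
    Nat.count_eq_card_filter_range, ← Set.ncard_coe_finset]
  simp

theorem hasDensity_of_periodic {p : ℕ → Prop} [DecidablePred p] {a : ℕ} (ha : 0 < a)
    (hp : Periodic p a) : HasDensity {n | 0 < n ∧ p n} (Nat.count p a / a) := by
  have hshift : Nat.count (fun k => p (k + 1)) a = Nat.count p a := by
    have := Nat.count_add_period hp 1
    rw [Nat.count_add] at this
    simp_rw [add_comm 1] at this
    omega
  unfold HasDensity
  simpa only [countIn_eq_count, hshift] using Nat.tendsto_count_div_atTop ha (hp.add_const 1)

theorem periodic_exists_dvd {S : Finset ℕ} {L : ℕ} (hSL : ∀ s ∈ S, s ∣ L) :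
    Periodic (fun n => ∃ s ∈ S, s ∣ n) L := fun _ =>
  propext <| exists_congr fun s => and_congr_right fun hs => Nat.dvd_add_left (hSL s hs)

theorem count_not_dvd_insert {S : Finset ℕ} {m h : ℕ} (hh : 0 < h) (hSm : ∀ s ∈ S, s ∣ m)
    (hhm : Nat.Coprime h m) :
    Nat.count (fun n => ¬ ∃ s ∈ insert h S, s ∣ n) (m * h)
      = Nat.count (fun n => ¬ ∃ s ∈ S, s ∣ n) m * (h - 1) := by
  set Q : ℕ → Prop := fun n => ¬ ∃ s ∈ S, s ∣ n
  have hQ : Periodic Q m := fun n => congrArg Not (periodic_exists_dvd hSm n)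
  have hQmul (k : ℕ) : Q (h * k) ↔ Q k :=
    not_congr <| exists_congr fun s => and_congr_right fun hs =>
      ((Nat.Coprime.coprime_dvd_right (hSm s hs) hhm).symm).dvd_mul_left
  have hcount : Nat.count Q (h * m) = h * Nat.count Q m := by
    simpa using Nat.count_add_mul_period hQ 0 h
  have hsplit :
      Nat.count Q m + Nat.count (fun n => ¬ h ∣ n ∧ Q n) (h * m) = h * Nat.count Q m := by
    simpa only [Nat.count_dvd_and_mul hh, hQmul, hcount] using
      Nat.count_and_add_count_not_and (p := Q) (h ∣ ·) (h * m)
  have hinsert : Nat.count (fun n => ¬ ∃ s ∈ insert h S, s ∣ n) (m * h)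
      = Nat.count (fun n => ¬ h ∣ n ∧ Q n) (h * m) := by
    simp only [Finset.exists_mem_insert, not_or, mul_comm m h, Q]
  rw [hinsert, Nat.mul_sub_one, mul_comm _ h]
  exact Nat.eq_sub_of_add_eq' hsplit

noncomputable def nonMultipleRatio (S : Finset ℕ) (L : ℕ) : ℝ :=
  Nat.count (fun n => ¬ ∃ s ∈ S, s ∣ n) L / L

theorem dvd_mul_prod_of_mem_union {R S : Finset ℕ} {L : ℕ} (hSL : ∀ s ∈ S, s ∣ L) :
    ∀ s ∈ R ∪ S, s ∣ L * ∏ r ∈ R, r := by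
  intro s hs
  rcases Finset.mem_union.mp hs with hs | hs
  · exact Dvd.dvd.mul_left (Finset.dvd_prod_of_mem _ hs) L
  · exact Dvd.dvd.mul_right (hSL s hs) _

theorem hasDensity_setOfMultiples {S : Finset ℕ} {L : ℕ} (hL : 0 < L)
    (hSL : ∀ s ∈ S, s ∣ L) :
    HasDensity (setOfMultiples S) (1 - nonMultipleRatio S L) := by
  have hsum : (Nat.count (fun n => ∃ s ∈ S, s ∣ n) L : ℝ)
      + Nat.count (fun n => ¬ ∃ s ∈ S, s ∣ n) L = L := by
    exact_mod_cast Nat.count_add_count_not L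
  have hL' : (L : ℝ) ≠ 0 := by positivity
  have hcompl : 1 - (Nat.count (fun n => ¬ ∃ s ∈ S, s ∣ n) L : ℝ) / L
      = Nat.count (fun n => ∃ s ∈ S, s ∣ n) L / L := by
    rw [eq_div_iff hL', sub_mul, div_mul_cancel₀ _ hL']
    linarith
  rw [nonMultipleRatio, hcompl]
  exact hasDensity_of_periodic hL (periodic_exists_dvd hSL)

theorem nonMultipleRatio_insert {S : Finset ℕ} {m h : ℕ} (hm : 0 < m) (hh : 0 < h)
    (hSm : ∀ s ∈ S, s ∣ m) (hhm : Nat.Coprime h m) :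
    nonMultipleRatio (insert h S) (m * h) = nonMultipleRatio S m * (1 - 1 / h) := by
  have hm' : (m : ℝ) ≠ 0 := by positivity
  have hh' : (h : ℝ) ≠ 0 := by positivity
  rw [nonMultipleRatio, nonMultipleRatio, count_not_dvd_insert hh hSm hhm]
  push_cast [Nat.cast_sub hh]
  field_simp

theorem nonMultipleRatio_union {R S : Finset ℕ} {L : ℕ} (hL : 0 < L)
    (hR : ∀ r ∈ R, 0 < r ∧ Nat.Coprime r L) (hRR : (R : Set ℕ).Pairwise Nat.Coprime)
    (hSL : ∀ s ∈ S, s ∣ L) :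
    nonMultipleRatio (R ∪ S) (L * ∏ r ∈ R, r)
      = nonMultipleRatio S L * ∏ r ∈ R, (1 - 1 / (r : ℝ)) := by
  induction R using Finset.induction_on with
  | empty => simp
  | insert r R hr ih =>
    rw [Finset.coe_insert, Set.pairwise_insert_of_symm] at hRR
    have hRpos : ∀ b ∈ R, 0 < b := fun b hb => (hR b (Finset.mem_insert_of_mem hb)).1
    have hcop : Nat.Coprime r (L * ∏ b ∈ R, b) :=
      (hR r (Finset.mem_insert_self r R)).2.mul_right <| Nat.Coprime.prod_right fun b hb =>
        hRR.2 b hb (ne_of_mem_of_not_mem hb hr).symm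
    rw [Finset.insert_union, Finset.prod_insert hr, mul_left_comm, mul_comm r,
      nonMultipleRatio_insert (Nat.mul_pos hL (Finset.prod_pos hRpos))
        (hR r (Finset.mem_insert_self r R)).1 (dvd_mul_prod_of_mem_union hSL) hcop,
      ih (fun b hb => hR b (Finset.mem_insert_of_mem hb)) hRR.1, Finset.prod_insert hr]
    ring

/-- Behrend-type formula: removing the elements of `H` coprime to all other elements
factors out of the density of the set of multiples. -/
theorem stmt1 (H : Finset ℕ) (hH : ∀ h ∈ H, 0 < h)
    (Hrel : Finset ℕ)
    (hHrel : Hrel = H.filter fun h => ∀ h' ∈ H, h' ≠ h → Nat.Coprime h h') :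
    ∃ δ δ' : ℝ,
      HasDensity (setOfMultiples H) δ ∧
      HasDensity (setOfMultiples (H \ Hrel)) δ' ∧
      1 - δ = (1 - δ') * ∏ h ∈ Hrel, (1 - 1 / (h : ℝ)) := by
  have hsub : Hrel ⊆ H := hHrel ▸ Finset.filter_subset _ _
  have hcoprime : ∀ r ∈ Hrel, ∀ h ∈ H, h ≠ r → Nat.Coprime r h := by
    subst hHrel
    exact fun r hr => (Finset.mem_filter.mp hr).2
  set G := H \ Hrel
  set L := ∏ s ∈ G, s
  have hL : 0 < L := Finset.prod_pos fun s hs => hH s (Finset.sdiff_subset hs)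
  have hGL : ∀ s ∈ G, s ∣ L := fun s hs => Finset.dvd_prod_of_mem _ hs
  have hR : ∀ r ∈ Hrel, 0 < r ∧ Nat.Coprime r L := fun r hr =>
    ⟨hH r (hsub hr), Nat.Coprime.prod_right fun s hs =>
      hcoprime r hr s (Finset.sdiff_subset hs)
        (ne_of_mem_of_not_mem hr (Finset.mem_sdiff.mp hs).2).symm⟩
  have hRR : (Hrel : Set ℕ).Pairwise Nat.Coprime := fun r hr r' hr' hne =>
    hcoprime r hr r' (hsub hr') hne.symm
  have hHG : Hrel ∪ G = H := Finset.union_sdiff_of_subset hsub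
  have hM : 0 < L * ∏ r ∈ Hrel, r := Nat.mul_pos hL (Finset.prod_pos fun r hr => (hR r hr).1)
  have hHM : ∀ h ∈ H, h ∣ L * ∏ r ∈ Hrel, r := hHG ▸ dvd_mul_prod_of_mem_union hGL
  refine ⟨_, _, hasDensity_setOfMultiples hM hHM, hasDensity_setOfMultiples hL hGL, ?_⟩
  rw [sub_sub_cancel, sub_sub_cancel, ← hHG, nonMultipleRatio_union hL hR hRR hGL]
end

section
/- Let H be a finite set of positive integers and p a prime. Define the p-scaled set H_(p) = {h/gcd(h,p) : h ∈ H} and the p-sieved set H^(p) = {h ∈ H : p ∤ h}. Then d(M(H)) = (1/p)·d(M(H_(p))) + (1 − 1/p)·d(M(H^(p))). -/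
open Filter

/-!
`M(H)` is periodic modulo `L = lcm H`, so its density is the proportion of `[1, pL]` it covers.
Split `[1, pL]` according to divisibility by `p`: a multiple `pm` lies in `M(H)` exactly when
`m ∈ M(H_(p))`, and an integer prime to `p` lies in `M(H)` exactly when it lies in `M(H^(p))`.
Since `H^(p)` is its own `p`-scaled set, the same split applied to `H^(p)` shows that the
integers of `[1, pL]` prime to `p` in `M(H^(p))` are `p - 1` times as many as those of `M(H^(p))`
in `[1, L]`.
-/

open Topology

lemma tendsto_div_of_abs_sub_mul_le {f : ℕ → ℝ} {δ C : ℝ}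
    (h : ∀ x : ℕ, |f x - x * δ| ≤ C) :
    Tendsto (fun x : ℕ => f x / x) atTop (𝓝 δ) := by
  rw [← tendsto_sub_nhds_zero_iff]
  refine squeeze_zero_norm' ?_ (tendsto_const_div_atTop_nhds_zero_nat C)
  filter_upwards [eventually_gt_atTop 0] with x hx
  have hx' : (0 : ℝ) < x := by exact_mod_cast hx
  rw [Real.norm_eq_abs, div_sub' hx'.ne', abs_div, abs_of_pos hx']
  exact div_le_div_of_nonneg_right (h x) hx'.le

@[simp]
lemma countIn_zero (S : Set ℕ) : countIn S 0 = 0 := by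
  simp [countIn]

lemma countIn_le (S : Set ℕ) (x : ℕ) : countIn S x ≤ x := by
  calc countIn S x ≤ (Set.Icc 1 x).ncard := Set.ncard_le_ncard Set.inter_subset_right
    _ = x := by rw [← Finset.coe_Icc, Set.ncard_coe_finset, Nat.card_Icc, Nat.add_sub_cancel]

section Periodic

variable {S : Set ℕ} {L : ℕ}

lemma countIn_add_of_periodic (hS : ∀ n, 0 < n → (n + L ∈ S ↔ n ∈ S)) (m : ℕ) :
    countIn S (L + m) = countIn S L + countIn S m := by
  have hsplit :
      S ∩ Set.Icc 1 (L + m) = S ∩ Set.Icc 1 L ∪ (· + L) '' (S ∩ Set.Icc 1 m) := by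
    ext n
    simp only [Set.mem_inter_iff, Set.mem_Icc, Set.mem_union, Set.mem_image]
    constructor
    · rintro ⟨hnS, h1, h2⟩
      by_cases hnL : n ≤ L
      · exact Or.inl ⟨hnS, h1, hnL⟩
      · refine Or.inr ⟨n - L, ⟨(hS _ (by omega)).1 ?_, by omega, by omega⟩, by omega⟩
        rwa [Nat.sub_add_cancel (by omega)]
    · rintro (⟨hnS, h1, h2⟩ | ⟨k, ⟨hkS, h1, h2⟩, rfl⟩)
      · exact ⟨hnS, h1, by omega⟩
      · exact ⟨(hS k (by omega)).2 hkS, by omega, by omega⟩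
  have hdisj : Disjoint (S ∩ Set.Icc 1 L) ((· + L) '' (S ∩ Set.Icc 1 m)) := by
    rw [Set.disjoint_left]
    rintro _ ⟨-, -, hnL⟩ ⟨k, ⟨-, hk, -⟩, rfl⟩
    simp only at hnL
    omega
  rw [countIn, hsplit, Set.ncard_union_eq hdisj (Set.toFinite _) (Set.toFinite _),
    Set.ncard_image_of_injective _ (add_left_injective L)]
  rfl

lemma countIn_mul_add_of_periodic (hS : ∀ n, 0 < n → (n + L ∈ S ↔ n ∈ S)) (k m : ℕ) :
    countIn S (k * L + m) = k * countIn S L + countIn S m := by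
  induction k with
  | zero => simp
  | succ k ih =>
    rw [show (k + 1) * L + m = L + (k * L + m) by ring, countIn_add_of_periodic hS, ih]
    ring

lemma countIn_mul_of_periodic (hS : ∀ n, 0 < n → (n + L ∈ S ↔ n ∈ S)) (k : ℕ) :
    countIn S (k * L) = k * countIn S L := by
  simpa using countIn_mul_add_of_periodic hS k 0

lemma hasDensity_of_periodic_s2 (hL : 0 < L) (hS : ∀ n, 0 < n → (n + L ∈ S ↔ n ∈ S)) :
    HasDensity S (countIn S L / L) := by
  have hL' : (0 : ℝ) < L := by exact_mod_cast hL
  refine tendsto_div_of_abs_sub_mul_le (C := L) fun x => ?_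
  set r := x % L
  have hcount :
      (countIn S x : ℝ) - x * (countIn S L / L) = countIn S r - r * (countIn S L / L) := by
    rw [← Nat.div_add_mod' x L, countIn_mul_add_of_periodic hS]
    push_cast
    field_simp
    ring
  have hr : (r : ℝ) ≤ L := by exact_mod_cast (Nat.mod_lt x hL).le
  have hcL : (countIn S L : ℝ) / L ≤ 1 :=
    div_le_one_of_le₀ (by exact_mod_cast countIn_le S L) hL'.le
  rw [hcount]
  refine abs_sub_le_of_nonneg_of_le (by positivity) ?_ (by positivity) ?_
  · exact (Nat.cast_le.2 (countIn_le S r)).trans hr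
  · exact (mul_le_of_le_one_right (by positivity) hcL).trans hr

end Periodic

lemma countIn_mul (S : Set ℕ) {p : ℕ} (hp : 0 < p) (x : ℕ) :
    countIn S (p * x) = countIn ((p * ·) ⁻¹' S) x + countIn {n ∈ S | ¬ p ∣ n} (p * x) := by
  have hdvd : S ∩ Set.Icc 1 (p * x) ∩ {n | p ∣ n} =
      (p * ·) '' ((p * ·) ⁻¹' S ∩ Set.Icc 1 x) := by
    ext n
    simp only [Set.mem_inter_iff, Set.mem_Icc, Set.mem_ofPred_eq, Set.mem_image, Set.mem_preimage]
    constructor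
    · rintro ⟨⟨hnS, h1, h2⟩, k, rfl⟩
      exact ⟨k, ⟨hnS, Nat.pos_of_mul_pos_left h1, Nat.le_of_mul_le_mul_left h2 hp⟩, rfl⟩
    · rintro ⟨k, ⟨hkS, h1, h2⟩, rfl⟩
      exact ⟨⟨hkS, Nat.mul_pos hp h1, Nat.mul_le_mul_left p h2⟩, dvd_mul_right p k⟩
  have hndvd :
      (S ∩ Set.Icc 1 (p * x)) \ {n | p ∣ n} = {n ∈ S | ¬ p ∣ n} ∩ Set.Icc 1 (p * x) := by
    ext n
    simp only [Set.mem_sdiff, Set.mem_inter_iff, Set.mem_ofPred_eq]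
    tauto
  rw [countIn, ← Set.ncard_inter_add_ncard_sdiff_eq_ncard _ {n | p ∣ n} (Set.toFinite _), hdvd,
    hndvd, Set.ncard_image_of_injective _ (mul_right_injective₀ hp.ne')]
  rfl

section Multiples

variable {H : Finset ℕ}

lemma add_mem_setOfMultiples_iff {L : ℕ} (hL : ∀ h ∈ H, h ∣ L) {n : ℕ} (hn : 0 < n) :
    n + L ∈ setOfMultiples H ↔ n ∈ setOfMultiples H := by
  simp only [setOfMultiples, Set.mem_ofPred_eq, hn, Nat.add_pos_left hn, true_and]
  exact exists_congr fun h => and_congr_right fun hh => Nat.dvd_add_left (hL h hh)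

lemma hasDensity_setOfMultiples_s2 {L : ℕ} (hL0 : 0 < L) (hL : ∀ h ∈ H, h ∣ L) :
    HasDensity (setOfMultiples H) (countIn (setOfMultiples H) L / L) :=
  hasDensity_of_periodic_s2 hL0 fun _ hn => add_mem_setOfMultiples_iff hL hn

lemma dvd_mul_iff_div_gcd_dvd {h p : ℕ} (hp : 0 < p) (m : ℕ) :
    h ∣ p * m ↔ h / h.gcd p ∣ m := by
  have hg : 0 < h.gcd p := Nat.gcd_pos_of_pos_right h hp
  calc h ∣ p * m ↔ h.gcd p * (h / h.gcd p) ∣ h.gcd p * (p / h.gcd p * m) := by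
        rw [Nat.mul_div_cancel' (Nat.gcd_dvd_left h p), ← mul_assoc,
          Nat.mul_div_cancel' (Nat.gcd_dvd_right h p)]
    _ ↔ h / h.gcd p ∣ p / h.gcd p * m := Nat.mul_dvd_mul_iff_left hg
    _ ↔ h / h.gcd p ∣ m := (Nat.coprime_div_gcd_div_gcd hg).dvd_mul_left

lemma preimage_mul_setOfMultiples {p : ℕ} (hp : 0 < p) :
    (p * ·) ⁻¹' setOfMultiples H = setOfMultiples (H.image fun h => h / h.gcd p) := by
  ext m
  simp only [setOfMultiples, Set.mem_preimage, Set.mem_ofPred_eq, Finset.exists_mem_image,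
    dvd_mul_iff_div_gcd_dvd hp, Nat.mul_pos_iff_of_pos_left hp]

lemma preimage_mul_setOfMultiples_of_coprime {p : ℕ} (hp : 0 < p)
    (hH : ∀ h ∈ H, h.Coprime p) :
    (p * ·) ⁻¹' setOfMultiples H = setOfMultiples H := by
  ext m
  simp only [setOfMultiples, Set.mem_preimage, Set.mem_ofPred_eq, Nat.mul_pos_iff_of_pos_left hp]
  exact and_congr_right fun _ => exists_congr fun h =>
    and_congr_right fun hh => (hH h hh).dvd_mul_left

lemma sep_not_dvd_setOfMultiples (p : ℕ) :
    {n ∈ setOfMultiples H | ¬ p ∣ n} =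
      {n ∈ setOfMultiples (H.filter fun h => ¬ p ∣ h) | ¬ p ∣ n} := by
  ext n
  simp only [setOfMultiples, Set.mem_ofPred_eq, Finset.mem_filter]
  constructor
  · rintro ⟨⟨hn, h, hh, hdvd⟩, hpn⟩
    exact ⟨⟨hn, h, ⟨hh, fun hph => hpn (hph.trans hdvd)⟩, hdvd⟩, hpn⟩
  · rintro ⟨⟨hn, h, ⟨hh, -⟩, hdvd⟩, hpn⟩
    exact ⟨⟨hn, h, hh, hdvd⟩, hpn⟩

end Multiples

/-- Behrend's identity: `d(M(H)) = (1/p)·d(M(H_(p))) + (1 − 1/p)·d(M(H^(p)))`, where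
`H_(p)` is the `p`-scaled set and `H^(p)` the `p`-sieved set. -/
theorem stmt2 (H : Finset ℕ) (hH : ∀ h ∈ H, 0 < h) (p : ℕ) (hp : p.Prime) :
    ∃ δ δ₁ δ₂ : ℝ,
      HasDensity (setOfMultiples H) δ ∧
      HasDensity (setOfMultiples (H.image fun h => h / Nat.gcd h p)) δ₁ ∧
      HasDensity (setOfMultiples (H.filter fun h => ¬ p ∣ h)) δ₂ ∧
      δ = (1 / (p : ℝ)) * δ₁ + (1 - 1 / (p : ℝ)) * δ₂ := by
  set H₁ := H.image fun h => h / Nat.gcd h p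
  set H₂ := H.filter fun h => ¬ p ∣ h
  set L := H.lcm id
  have hL : 0 < L := Nat.pos_of_ne_zero (Finset.lcm_ne_zero_iff.2 fun h hh => (hH h hh).ne')
  have hHL : ∀ h ∈ H, h ∣ L := fun h hh => Finset.dvd_lcm hh
  have hH₁L : ∀ h ∈ H₁, h ∣ L := by
    simp only [H₁, Finset.forall_mem_image]
    exact fun h hh => (Nat.div_dvd_of_dvd (Nat.gcd_dvd_left h p)).trans (hHL h hh)
  have hH₂L : ∀ h ∈ H₂, h ∣ L := fun h hh => hHL h (Finset.mem_filter.1 hh).1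
  refine ⟨_, _, _,
    hasDensity_setOfMultiples_s2 (Nat.mul_pos hp.pos hL) fun h hh => (hHL h hh).mul_left p,
    hasDensity_setOfMultiples_s2 hL hH₁L, hasDensity_setOfMultiples_s2 hL hH₂L, ?_⟩
  have hcount := countIn_mul (setOfMultiples H) hp.pos L
  rw [preimage_mul_setOfMultiples hp.pos, sep_not_dvd_setOfMultiples] at hcount
  have hcount₂ := countIn_mul (setOfMultiples H₂) hp.pos L
  have hH₂p : ∀ h ∈ H₂, h.Coprime p := fun h hh =>
    ((Nat.Prime.coprime_iff_not_dvd hp).2 (Finset.mem_filter.1 hh).2).symm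
  rw [preimage_mul_setOfMultiples_of_coprime hp.pos hH₂p, countIn_mul_of_periodic
    (fun _ hn => add_mem_setOfMultiples_iff hH₂L hn)] at hcount₂
  have hp' : (p : ℝ) ≠ 0 := by exact_mod_cast hp.ne_zero
  have hL' : (L : ℝ) ≠ 0 := by exact_mod_cast hL.ne'
  have hcount₂' : (p : ℝ) * countIn (setOfMultiples H₂) L = countIn (setOfMultiples H₂) L +
      countIn {n ∈ setOfMultiples H₂ | ¬ p ∣ n} (p * L) := by
    exact_mod_cast hcount₂
  rw [hcount]
  push_cast
  field_simp
  linear_combination -hcount₂'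
end

section
/- The additive quotient group O'/O, where O = ℤ + f·O_K and O' = ℤ + f'·O_K are orders in an imaginary quadratic field K with f' ∣ f, is a cyclic group of order f/f'. -/
/-!
Write `θ = i√m`. An integral element `a + bθ` of `ℚ(θ)` has integral trace `2a` and norm
`a² + mb²`; as `m` is squarefree this forces `2a, 2b ∈ ℤ`, and a computation mod 4 shows that
`O_K = ℤ + ℤω` with `ω = (1 + θ)/2` if `m ≡ 3 (mod 4)` and `ω = θ` otherwise. Hence the order of
conductor `n` is `ℤ + nℤω`. Since `1` and `ω` are `ℝ`-linearly independent, `k ↦ k·f'ω` maps `ℤ`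
onto `O'/O` with kernel `(f/f')ℤ`.
-/

open Complex ComplexConjugate Polynomial

noncomputable def sqrtNeg (m : ℕ) : ℂ := I * (Real.sqrt m : ℝ)

section sqrtNeg

variable {m : ℕ}

@[simp]
lemma sqrtNeg_im : (sqrtNeg m).im = Real.sqrt m := by simp [sqrtNeg]

lemma sqrtNeg_sq : sqrtNeg m ^ 2 = -m := by
  rw [sqrtNeg, mul_pow, ← ofReal_pow, Real.sq_sqrt m.cast_nonneg, I_sq]
  simp

lemma conj_sqrtNeg : conj (sqrtNeg m) = -sqrtNeg m := by
  simp [sqrtNeg]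

lemma isIntegral_sqrtNeg : IsIntegral ℤ (sqrtNeg m) :=
  ⟨X ^ 2 + C (m : ℤ), by monicity!, by simp [sqrtNeg_sq]⟩

lemma isIntegral_one_add_sqrtNeg_div_two (hm : m % 4 = 3) :
    IsIntegral ℤ ((1 + sqrtNeg m) / 2) := by
  obtain ⟨k, hk⟩ : ∃ k : ℕ, m + 1 = 4 * k := ⟨(m + 1) / 4, by omega⟩
  have hkC : (m : ℂ) + 1 = 4 * k := by exact_mod_cast hk
  refine ⟨X ^ 2 - X + C (k : ℤ), by monicity!, ?_⟩
  simp only [algebraMap_int_eq, map_natCast, eval₂_add, eval₂_sub, eval₂_X_pow, eval₂_X,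
    eval₂_natCast]
  linear_combination sqrtNeg_sq (m := m) / 4 - hkC / 4

end sqrtNeg

lemma Rat.exists_int_eq_of_squarefree_mul_sq {m : ℕ} (hm : Squarefree m) {q : ℚ} {t : ℤ}
    (h : m * q ^ 2 = t) : ∃ v : ℤ, q = v := by
  have hcross : (m : ℤ) * q.num ^ 2 = (q.den : ℤ) ^ 2 * t := by
    have hden : (q.den : ℚ) ≠ 0 := by exact_mod_cast q.den_nz
    rw [← Rat.num_div_den q] at h
    field_simp at h
    exact_mod_cast h
  have hcop : IsCoprime ((q.den : ℤ) ^ 2) (q.num ^ 2) :=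
    (Int.isCoprime_iff_gcd_eq_one.mpr (by simpa [Int.gcd, Nat.coprime_comm] using q.reduced)).pow
  have hdvd : q.den ^ 2 ∣ m := by
    have : ((q.den ^ 2 : ℕ) : ℤ) ∣ m := by
      push_cast
      exact hcop.dvd_of_dvd_mul_right ⟨t, hcross⟩
    exact_mod_cast this
  have hden : q.den = 1 := Nat.isUnit_iff.mp (hm q.den (by rwa [← pow_two]))
  exact ⟨q.num, (Rat.coe_int_num_of_den_eq_one hden).symm⟩

lemma exists_half_int_coords_of_isIntegral {m : ℕ} (hm : Squarefree m) {a b : ℚ}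
    (h : IsIntegral ℤ (a + b * sqrtNeg m)) :
    ∃ u v : ℤ, 2 * a = u ∧ 2 * b = v ∧ 4 ∣ u ^ 2 + m * v ^ 2 := by
  set z : ℂ := a + b * sqrtNeg m
  have hconj : conj z = a - b * sqrtNeg m := by simp [z, conj_sqrtNeg, sub_eq_add_neg]
  have hconj_int : IsIntegral ℤ (conj z) := h.map (starRingEnd ℂ).toIntAlgHom
  obtain ⟨u, hu⟩ : ∃ u : ℤ, ((2 * a : ℚ) : ℂ) = u := by
    have htrace : ((2 * a : ℚ) : ℂ) = z + conj z := by rw [hconj]; push_cast; ring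
    exact ((htrace ▸ h.add hconj_int).exists_int_iff_exists_rat).mp ⟨_, rfl⟩
  obtain ⟨N, hN⟩ : ∃ N : ℤ, ((a ^ 2 + m * b ^ 2 : ℚ) : ℂ) = N := by
    have hnorm : ((a ^ 2 + m * b ^ 2 : ℚ) : ℂ) = z * conj z := by
      rw [hconj]; push_cast; linear_combination (b : ℂ) ^ 2 * sqrtNeg_sq (m := m)
    exact ((hnorm ▸ h.mul hconj_int).exists_int_iff_exists_rat).mp ⟨_, rfl⟩
  have hu : 2 * a = u := by exact_mod_cast hu
  have hN : a ^ 2 + m * b ^ 2 = N := by exact_mod_cast hN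
  obtain ⟨v, hv⟩ := Rat.exists_int_eq_of_squarefree_mul_sq hm (q := 2 * b) (t := 4 * N - u ^ 2)
    (by push_cast; linear_combination 4 * hN - (2 * a + u) * hu)
  refine ⟨u, v, hu, hv, ⟨N, ?_⟩⟩
  have : (u : ℚ) ^ 2 + m * v ^ 2 = 4 * N := by
    linear_combination 4 * hN - (2 * a + u) * hu - m * (2 * b + v) * hv
  exact_mod_cast this

lemma Int.parity_of_four_dvd_sq_add_mul_sq {m u v : ℤ} (hm : ¬ 4 ∣ m)
    (h : 4 ∣ u ^ 2 + m * v ^ 2) : 2 ∣ u - v ∧ (m % 4 ≠ 3 → 2 ∣ u ∧ 2 ∣ v) := by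
  have key : ∀ x y c : ZMod 4, c ≠ 0 → x ^ 2 + c * y ^ 2 = 0 →
      2 * (x - y) = 0 ∧ (c ≠ 3 → 2 * x = 0 ∧ 2 * y = 0) := by decide
  have hcast (k : ℤ) : (k : ZMod 4) = 0 ↔ 4 ∣ k := by
    exact_mod_cast ZMod.intCast_zmod_eq_zero_iff_dvd k 4
  have h3 : (m : ZMod 4) = 3 ↔ m % 4 = 3 := by
    rw [← sub_eq_zero, show ((m : ZMod 4) - 3) = ((m - 3 : ℤ) : ZMod 4) by push_cast; ring,
      hcast]
    omega
  obtain ⟨h1, h2⟩ := key u v m (by rwa [Ne, hcast]) (by exact_mod_cast (hcast _).mpr h)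
  refine ⟨?_, fun hm3 => ?_⟩
  · have : 4 ∣ 2 * (u - v) := (hcast _).mp (by push_cast; exact h1)
    omega
  · obtain ⟨hx, hy⟩ := h2 (by rwa [Ne, h3])
    have hu : 4 ∣ 2 * u := (hcast _).mp (by push_cast; exact hx)
    have hv : 4 ∣ 2 * v := (hcast _).mp (by push_cast; exact hy)
    omega

lemma exists_integralBasis {m : ℕ} (hm : Squarefree m) :
    ∃ ω : ℂ, (∃ a b : ℚ, ω = a + b * sqrtNeg m) ∧ IsIntegral ℤ ω ∧ ω.im ≠ 0 ∧
      ∀ a b : ℚ, IsIntegral ℤ (a + b * sqrtNeg m) → ∃ x y : ℤ, a + b * sqrtNeg m = x + y * ω := by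
  have hm4 : ¬ (4 : ℤ) ∣ m := fun h => absurd (hm 2 (by exact_mod_cast h)) (by decide)
  have hsqrt : Real.sqrt m ≠ 0 := (Real.sqrt_pos.mpr (by exact_mod_cast hm.ne_zero.bot_lt)).ne'
  by_cases hm3 : (m : ℤ) % 4 = 3
  · refine ⟨(1 + sqrtNeg m) / 2, ⟨1 / 2, 1 / 2, by push_cast; ring⟩,
      isIntegral_one_add_sqrtNeg_div_two (by omega), by simpa using hsqrt, ?_⟩
    intro a b h
    obtain ⟨u, v, hu, hv, h4⟩ := exists_half_int_coords_of_isIntegral hm h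
    obtain ⟨t, ht⟩ := (Int.parity_of_four_dvd_sq_add_mul_sq hm4 h4).1
    refine ⟨t, v, ?_⟩
    have hu : 2 * (a : ℂ) = u := by exact_mod_cast hu
    have hv : 2 * (b : ℂ) = v := by exact_mod_cast hv
    have ht : (u : ℂ) - v = 2 * t := by exact_mod_cast ht
    linear_combination hu / 2 + sqrtNeg m * hv / 2 + ht / 2
  · refine ⟨sqrtNeg m, ⟨0, 1, by simp⟩, isIntegral_sqrtNeg, by simpa using hsqrt, ?_⟩
    intro a b h
    obtain ⟨u, v, hu, hv, h4⟩ := exists_half_int_coords_of_isIntegral hm h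
    obtain ⟨⟨t, ht⟩, ⟨s, hs⟩⟩ := (Int.parity_of_four_dvd_sq_add_mul_sq hm4 h4).2 hm3
    refine ⟨t, s, ?_⟩
    have hu : 2 * (a : ℂ) = u := by exact_mod_cast hu
    have hv : 2 * (b : ℂ) = v := by exact_mod_cast hv
    have ht : (u : ℂ) = 2 * t := by exact_mod_cast ht
    have hs : (v : ℂ) = 2 * s := by exact_mod_cast hs
    linear_combination hu / 2 + sqrtNeg m * hv / 2 + ht / 2 + sqrtNeg m * hs / 2

def orderOfConductor (ω : ℂ) (n : ℕ) : AddSubgroup ℂ := AddSubgroup.closure {1, n * ω}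

section orderOfConductor

variable {ω : ℂ}

lemma mem_orderOfConductor {n : ℕ} {z : ℂ} :
    z ∈ orderOfConductor ω n ↔ ∃ x c : ℤ, z = x + c * (n * ω) := by
  simp only [orderOfConductor, AddSubgroup.mem_closure_pair, zsmul_eq_mul, mul_one, eq_comm]

lemma intCast_mem_orderOfConductor (n : ℕ) (x : ℤ) : (x : ℂ) ∈ orderOfConductor ω n :=
  mem_orderOfConductor.mpr ⟨x, 0, by simp⟩

lemma intCast_mul_mem_orderOfConductor_iff (hω : ω.im ≠ 0) (n : ℕ) (k : ℤ) :
    k * ω ∈ orderOfConductor ω n ↔ (n : ℤ) ∣ k := by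
  refine ⟨fun h => ?_, fun ⟨c, hc⟩ => mem_orderOfConductor.mpr ⟨0, c, by push_cast [hc]; ring⟩⟩
  obtain ⟨x, c, hxc⟩ := mem_orderOfConductor.mp h
  have him : (k : ℝ) * ω.im = (n * c : ℤ) * ω.im := by
    simpa [mul_comm, mul_left_comm] using congrArg Complex.im hxc
  exact ⟨c, by exact_mod_cast mul_right_cancel₀ hω him⟩

lemma eq_orderOfConductor {OK : Subring ℂ} (hω : ω ∈ OK)
    (hOK : ∀ z ∈ OK, ∃ x y : ℤ, z = x + y * ω) {O : AddSubgroup ℂ} {n : ℕ}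
    (hO : (O : Set ℂ) = {z : ℂ | ∃ (a : ℤ) (w : ℂ), w ∈ OK ∧ z = (a : ℂ) + (n : ℂ) * w}) :
    O = orderOfConductor ω n := by
  ext z
  rw [← SetLike.mem_coe, hO, Set.mem_ofPred_eq, mem_orderOfConductor]
  constructor
  · rintro ⟨a, w, hw, rfl⟩
    obtain ⟨x, y, rfl⟩ := hOK w hw
    exact ⟨a + n * x, y, by push_cast; ring⟩
  · rintro ⟨x, c, rfl⟩
    exact ⟨x, c * ω, mul_mem (intCast_mem OK c) hω, by ring⟩

end orderOfConductor

noncomputable def orderOfConductorQuotientEquiv {ω : ℂ} {n n' : ℕ} (hω : ω.im ≠ 0) (hn' : n' ≠ 0)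
    (h : n' ∣ n) :
    orderOfConductor ω n' ⧸ (orderOfConductor ω n).addSubgroupOf (orderOfConductor ω n') ≃+
      ZMod (n / n') :=
  let gen : orderOfConductor ω n' := ⟨n' * ω, mem_orderOfConductor.mpr ⟨0, 1, by simp⟩⟩
  let φ := zmultiplesHom _ (gen : orderOfConductor ω n' ⧸ _)
  have hsurj : Function.Surjective φ := by
    intro q
    obtain ⟨⟨z, hz⟩, rfl⟩ := QuotientAddGroup.mk_surjective q
    obtain ⟨x, c, rfl⟩ := mem_orderOfConductor.mp hz
    refine ⟨c, ?_⟩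
    rw [zmultiplesHom_apply, ← QuotientAddGroup.mk_zsmul, QuotientAddGroup.eq,
      AddSubgroup.mem_addSubgroupOf]
    simpa [gen] using intCast_mem_orderOfConductor n x
  have hker : φ.ker = AddSubgroup.zmultiples ((n / n' : ℕ) : ℤ) := by
    ext c
    have hcoe : ((c • gen : orderOfConductor ω n') : ℂ) = (c * n' : ℤ) * ω := by
      simp only [AddSubgroupClass.coe_zsmul, zsmul_eq_mul, Int.cast_mul, Int.cast_natCast, gen]
      ring
    have hn : (n : ℤ) = n' * (n / n' : ℕ) := by exact_mod_cast (Nat.mul_div_cancel' h).symm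
    rw [AddMonoidHom.mem_ker, zmultiplesHom_apply, ← QuotientAddGroup.mk_zsmul,
      QuotientAddGroup.eq_zero_iff, AddSubgroup.mem_addSubgroupOf, Int.mem_zmultiples_iff, hcoe,
      intCast_mul_mem_orderOfConductor_iff hω, hn, mul_comm c,
      mul_dvd_mul_iff_left (by exact_mod_cast hn')]
  (QuotientAddGroup.quotientKerEquivOfSurjective φ hsurj).symm.trans <|
    (QuotientAddGroup.quotientAddEquivOfEq hker).trans (Int.quotientZMultiplesNatEquivZMod _)

theorem stmt6_general (K : Subfield ℂ) (m : ℕ) (hm : Squarefree m)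
    (hK : (K : Set ℂ) =
      {z : ℂ | ∃ a b : ℚ, z = (a : ℂ) + (b : ℂ) * Complex.I * (Real.sqrt m : ℝ)})
    (OK : Subring ℂ) (hOK : ∀ z : ℂ, z ∈ OK ↔ z ∈ K ∧ IsIntegral ℤ z)
    (f f' : ℕ) (hf' : 0 < f') (hdvd : f' ∣ f)
    (O O' : AddSubgroup ℂ)
    (hO : (O : Set ℂ) = {z : ℂ | ∃ (a : ℤ) (w : ℂ), w ∈ OK ∧ z = (a : ℂ) + (f : ℂ) * w})
    (hO' : (O' : Set ℂ) =
      {z : ℂ | ∃ (a : ℤ) (w : ℂ), w ∈ OK ∧ z = (a : ℂ) + (f' : ℂ) * w}) :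
    IsAddCyclic (O' ⧸ O.addSubgroupOf O') ∧
      Nat.card (O' ⧸ O.addSubgroupOf O') = f / f' := by
  have hmemK (z : ℂ) : z ∈ K ↔ ∃ a b : ℚ, z = a + b * sqrtNeg m := by
    simp only [← SetLike.mem_coe, hK, Set.mem_ofPred_eq, sqrtNeg, mul_assoc]
  obtain ⟨ω, hωK, hωint, hωim, hbasis⟩ := exists_integralBasis hm
  have hωOK : ω ∈ OK := (hOK ω).mpr ⟨(hmemK ω).mpr hωK, hωint⟩
  have hOK_basis (z : ℂ) (hz : z ∈ OK) : ∃ x y : ℤ, z = x + y * ω := by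
    obtain ⟨hzK, hzint⟩ := (hOK z).mp hz
    obtain ⟨a, b, rfl⟩ := (hmemK z).mp hzK
    exact hbasis a b hzint
  obtain rfl := eq_orderOfConductor hωOK hOK_basis hO
  obtain rfl := eq_orderOfConductor hωOK hOK_basis hO'
  let e := orderOfConductorQuotientEquiv hωim hf'.ne' hdvd
  exact ⟨isAddCyclic_of_surjective e.symm e.symm.surjective,
    (Nat.card_congr e.toEquiv).trans (Nat.card_zmod _)⟩

/-- The additive quotient `O'/O`, where `O = ℤ + f·O_K` and `O' = ℤ + f'·O_K` are the
orders of conductors `f` and `f'` (with `f' ∣ f`) in an imaginary quadratic field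
`K ⊆ ℂ`, is a cyclic group of order `f/f'`. -/
theorem stmt6 (K : Subfield ℂ) (m : ℕ) (hm : Squarefree m) (hmpos : 0 < m)
    (hK : (K : Set ℂ) =
      {z : ℂ | ∃ a b : ℚ, z = (a : ℂ) + (b : ℂ) * Complex.I * (Real.sqrt m : ℝ)})
    (OK : Subring ℂ) (hOK : ∀ z : ℂ, z ∈ OK ↔ z ∈ K ∧ IsIntegral ℤ z)
    (f f' : ℕ) (hf' : 0 < f') (hdvd : f' ∣ f)
    (O O' : AddSubgroup ℂ)
    (hO : (O : Set ℂ) = {z : ℂ | ∃ (a : ℤ) (w : ℂ), w ∈ OK ∧ z = (a : ℂ) + (f : ℂ) * w})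
    (hO' : (O' : Set ℂ) =
      {z : ℂ | ∃ (a : ℤ) (w : ℂ), w ∈ OK ∧ z = (a : ℂ) + (f' : ℂ) * w}) :
    IsAddCyclic (O' ⧸ O.addSubgroupOf O') ∧
      Nat.card (O' ⧸ O.addSubgroupOf O') = f / f' :=
  stmt6_general K m hm hK OK hOK f f' hf' hdvd O O' hO hO'
end

section
/- Let G be a set of positive integers with convergent reciprocal sum, and for real z let A_z = {n odd : every g ∈ G with g ∣ n satisfies g ≤ z and {g ∈ G ∩ [1,z] : g ∣ n} = H} for a fixed finite H ⊆ G with max H < z. Then A := {n odd : {g ∈ G : g ∣ n} = H} satisfies: d(A_z) exists for each z, is nonincreasing in z, A ⊆ A_{z'} ⊆ A_z for z' > z > max H, and the upper density of A_z \ A is at most ∑_{g ∈ G, g > z} 1/g. Consequently d(A) exists and equals lim_{z→∞} d(A_z). -/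
/-!
Once `z > max H`, the condition that every divisor of `n` from `G` is at most `z` makes `A_z`
coincide with `A`, so everything reduces to the existence of `d(A)`. For that, approximate `A` from
above by the set `B_z` of odd `n` whose divisors from `G ∩ [1, z]` are exactly the elements of `H`.
Membership in `B_z` depends only on `n` modulo `2 ∏_{g ∈ G, g ≤ z} g`, so `B_z` has a density
`β_z`, nonincreasing in `z`. An element of `B_z \ A` is a multiple of some `g ∈ G` with `g > z`,
so `B_z` exceeds `A` by at most `∑_{g ∈ G, g > z} 1/g` in upper density; this tail tends to `0`,
hence `A` has density `lim β_z`.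
-/

open Filter

/-- For `z : ℝ`, the set `A_z` of odd `n` all of whose divisors from `G` are at most `z`
and whose set of divisors from `G ∩ [1,z]` equals `H`. -/
def Az (G : Set ℕ) (H : Finset ℕ) (z : ℝ) : Set ℕ :=
  {n : ℕ | Odd n ∧ (∀ g ∈ G, g ∣ n → (g : ℝ) ≤ z) ∧
    {g ∈ G | (g : ℝ) ≤ z ∧ g ∣ n} = ↑H}

/-- The set `A` of odd `n` whose set of divisors from `G` equals `H`. -/
def Aset (G : Set ℕ) (H : Finset ℕ) : Set ℕ := {n : ℕ | Odd n ∧ {g ∈ G | g ∣ n} = ↑H}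

open Finset Function

lemma countIn_eq_card (S : Set ℕ) [DecidablePred (· ∈ S)] (x : ℕ) :
    countIn S x = #{n ∈ Ioc 0 x | n ∈ S} := by
  rw [countIn, ← Set.ncard_coe_finset]
  congr 1
  ext n
  simp [and_comm, Nat.one_le_iff_ne_zero, Nat.pos_iff_ne_zero]
  tauto

lemma countIn_eq_count_s16 (S : Set ℕ) [DecidablePred (· ∈ S)] (x : ℕ) :
    countIn S x = Nat.count (· + 1 ∈ S) x := by
  rw [countIn_eq_card, Nat.count_eq_card_filter_range, range_eq_Ico,
    ← Ico_add_one_add_one_eq_Ioc, ← map_add_right_Ico, filter_map, card_map]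
  rfl

lemma countIn_le_of_subset {S T : Set ℕ} (h : S ⊆ T) (x : ℕ) : countIn S x ≤ countIn T x :=
  Set.ncard_le_ncard (Set.inter_subset_inter_left _ h) ((Set.finite_Icc 1 x).inter_of_right _)

lemma countIn_le_add_countIn_diff (S T : Set ℕ) (x : ℕ) :
    countIn T x ≤ countIn S x + countIn (T \ S) x := by
  refine (Set.ncard_le_ncard ?_ ((Set.finite_Icc 1 x).inter_of_right _ |>.union
    ((Set.finite_Icc 1 x).inter_of_right _))).trans (Set.ncard_union_le _ _)
  intro n ⟨hT, hI⟩
  by_cases hS : n ∈ S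
  exacts [Or.inl ⟨hS, hI⟩, Or.inr ⟨⟨hT, hS⟩, hI⟩]

lemma Function.Periodic.count_mul_add {p : ℕ → Prop} [DecidablePred p] {m : ℕ}
    (hp : Periodic p m) (k b : ℕ) :
    Nat.count p (k * m + b) = k * Nat.count p m + Nat.count p b := by
  have hshift (k j : ℕ) : p (k * m + j) ↔ p j := by simpa [add_comm] using (hp.nat_mul k j).to_iff
  have hmul (k : ℕ) : Nat.count p (k * m) = k * Nat.count p m := by
    induction k with
    | zero => simp
    | succ k ih => simp only [add_mul, one_mul, Nat.count_add, ih, hshift]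
  simp only [Nat.count_add, hshift, hmul]

lemma countIn_bounds_of_periodic {S : Set ℕ} {m : ℕ} (hm : 0 < m) (hS : Periodic (· ∈ S) m)
    (x : ℕ) : x / m * countIn S m ≤ countIn S x ∧ countIn S x ≤ (x / m + 1) * countIn S m := by
  classical
  have hp : Periodic (· + 1 ∈ S) m := fun n ↦ by simpa only [add_right_comm] using hS (n + 1)
  have hrem : Nat.count (· + 1 ∈ S) (x % m) ≤ Nat.count (· + 1 ∈ S) m :=
    Nat.count_monotone _ (Nat.mod_lt x hm).le
  have hsplit : countIn S x = x / m * countIn S m + Nat.count (· + 1 ∈ S) (x % m) := by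
    rw [countIn_eq_count_s16, countIn_eq_count_s16, ← hp.count_mul_add, Nat.div_add_mod']
  rw [hsplit, add_one_mul, countIn_eq_count_s16]
  exact ⟨Nat.le_add_right _ _, Nat.add_le_add_left hrem _⟩

lemma hasDensity_of_periodic_s16 {S : Set ℕ} {m : ℕ} (hm : 0 < m) (hS : Periodic (· ∈ S) m) :
    HasDensity S (countIn S m / m) := by
  have hbounds := countIn_bounds_of_periodic hm hS
  generalize countIn S m = c at hbounds ⊢
  have hm' : (0 : ℝ) < m := by exact_mod_cast hm
  have hsqueeze (x : ℕ) (hx : 0 < x) :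
      c / m - c / x ≤ (countIn S x : ℝ) / x ∧ (countIn S x : ℝ) / x ≤ c / m + c / x := by
    have hx' : (0 : ℝ) < x := by exact_mod_cast hx
    obtain ⟨hlo, hhi⟩ := hbounds x
    have hq₁ : ((x / m : ℕ) : ℝ) * m ≤ x := by exact_mod_cast Nat.div_mul_le_self x m
    have hq₂ : (x : ℝ) ≤ ((x / m : ℕ) + 1) * m := by
      exact_mod_cast (add_one_mul (x / m) m).symm ▸ (Nat.lt_div_mul_add (a := x) hm).le
    have hlo' : ((x / m : ℕ) : ℝ) * c ≤ countIn S x := by exact_mod_cast hlo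
    have hhi' : (countIn S x : ℝ) ≤ ((x / m : ℕ) + 1) * c := by exact_mod_cast hhi
    have hc : (0 : ℝ) ≤ c := Nat.cast_nonneg c
    have h₁ : (c : ℝ) * x ≤ countIn S x * m + c * m := by nlinarith
    have h₂ : (countIn S x : ℝ) * m ≤ c * x + c * m := by nlinarith
    constructor
    · field_simp
      linarith
    · field_simp
      linarith
  have hcx : Tendsto (fun x : ℕ ↦ (c : ℝ) / x) atTop (nhds 0) :=
    tendsto_const_div_atTop_nhds_zero_nat _
  refine tendsto_of_tendsto_of_tendsto_of_le_of_le' (by simpa using hcx.const_sub ((c : ℝ) / m))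
    (by simpa using hcx.const_add ((c : ℝ) / m)) ?_ ?_
  all_goals filter_upwards [eventually_gt_atTop 0] with x hx
  exacts [(hsqueeze x hx).1, (hsqueeze x hx).2]

lemma HasDensity.nonneg {S : Set ℕ} {d : ℝ} (h : HasDensity S d) : 0 ≤ d :=
  ge_of_tendsto' h fun _ ↦ by positivity

lemma HasDensity.le_of_subset {S T : Set ℕ} {a b : ℝ} (hST : S ⊆ T) (hS : HasDensity S a)
    (hT : HasDensity T b) : a ≤ b :=
  le_of_tendsto_of_tendsto' hS hT fun x ↦
    div_le_div_of_nonneg_right (by exact_mod_cast countIn_le_of_subset hST x) (Nat.cast_nonneg x)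

theorem hasDensity_of_approx {ι : Type*} {l : Filter ι} [l.NeBot] {S : Set ℕ} {B : ι → Set ℕ}
    {β ε : ι → ℝ} {d : ℝ} (hB : ∀ i, HasDensity (B i) (β i)) (hβ : Tendsto β l (nhds d))
    (hε : Tendsto ε l (nhds 0)) (hSB : ∀ i, S ⊆ B i)
    (hBS : ∀ᶠ i in l, ∀ x, (countIn (B i) x : ℝ) ≤ countIn S x + x * ε i) :
    HasDensity S d := by
  refine tendsto_order.2 ⟨fun a ha ↦ ?_, fun b hb ↦ ?_⟩
  · have hβε : Tendsto (fun i ↦ β i - ε i) l (nhds d) := by simpa using hβ.sub hε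
    obtain ⟨i, hi, hBSi⟩ := ((hβε.eventually_const_lt ha).and hBS).exists
    filter_upwards [(hB i).eventually_const_lt (lt_sub_iff_add_lt.1 hi),
      eventually_gt_atTop 0] with x hx hx₀
    have hx₀' : (0 : ℝ) < x := by exact_mod_cast hx₀
    have : (countIn (B i) x : ℝ) / x - ε i ≤ countIn S x / x := by
      rw [sub_le_iff_le_add, div_le_iff₀ hx₀', add_mul, div_mul_cancel₀ _ hx₀'.ne']
      linarith [hBSi x]
    linarith
  · obtain ⟨i, hi⟩ := (hβ.eventually_lt_const hb).exists
    filter_upwards [(hB i).eventually_lt_const hi] with x hx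
    exact lt_of_le_of_lt (div_le_div_of_nonneg_right
      (by exact_mod_cast countIn_le_of_subset (hSB i) x) (Nat.cast_nonneg x)) hx

section Multiples

variable (G : Set ℕ)

noncomputable def recipTail (z : ℕ) : ℝ := ∑' g : G, if z < (g : ℕ) then (1 : ℝ) / g else 0

variable {G}

lemma recipTail_nonneg (z : ℕ) : 0 ≤ recipTail G z :=
  tsum_nonneg fun _ ↦ by split_ifs <;> positivity

lemma tendsto_recipTail (hsum : Summable fun g : G ↦ (1 : ℝ) / (g : ℕ)) :
    Tendsto (recipTail G) atTop (nhds 0) := by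
  unfold recipTail
  simpa using tendsto_tsum_of_dominated_convergence (𝓕 := atTop) (g := fun _ : G ↦ (0 : ℝ)) hsum
    (fun g ↦ tendsto_const_nhds.congr' <| (eventually_ge_atTop (g : ℕ)).mono fun z hz ↦
      (if_neg (not_lt.2 hz)).symm)
    (Eventually.of_forall fun z g ↦ by split_ifs <;> simp)

lemma countIn_multiples_le (hsum : Summable fun g : G ↦ (1 : ℝ) / (g : ℕ)) (z x : ℕ) :
    (countIn {n | ∃ g ∈ G, z < g ∧ g ∣ n} x : ℝ) ≤ x * recipTail G z := by
  classical
  set T : Finset G := ((Ioc 0 x).subtype (· ∈ G)).filter (z < ·)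
  have hcover : {n ∈ Ioc 0 x | n ∈ {n | ∃ g ∈ G, z < g ∧ g ∣ n}} ⊆
      T.biUnion fun g ↦ {n ∈ Ioc 0 x | (g : ℕ) ∣ n} := by
    simp only [subset_iff, mem_filter, mem_Ioc, Set.mem_ofPred_eq, mem_biUnion, mem_subtype, T]
    rintro n ⟨⟨hn₀, hnx⟩, g, hg, hzg, hgn⟩
    exact ⟨⟨g, hg⟩, ⟨⟨(Nat.zero_le z).trans_lt hzg, (Nat.le_of_dvd hn₀ hgn).trans hnx⟩, hzg⟩,
      ⟨hn₀, hnx⟩, hgn⟩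
  have hcount : countIn {n | ∃ g ∈ G, z < g ∧ g ∣ n} x ≤ ∑ g ∈ T, x / (g : ℕ) := by
    rw [countIn_eq_card]
    refine (card_le_card hcover).trans (card_biUnion_le.trans_eq ?_)
    simp only [Nat.Ioc_filter_dvd_card_eq_div]
  have hsummable : Summable fun g : G ↦ if z < (g : ℕ) then (1 : ℝ) / g else 0 :=
    hsum.of_nonneg_of_le (fun _ ↦ by split_ifs <;> positivity)
      (fun _ ↦ by split_ifs <;> simp)
  calc (countIn {n | ∃ g ∈ G, z < g ∧ g ∣ n} x : ℝ)
      ≤ ∑ g ∈ T, (x : ℝ) / (g : ℕ) := by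
        refine (Nat.cast_le.2 hcount).trans ?_
        push_cast
        exact sum_le_sum fun _ _ ↦ Nat.cast_div_le
    _ = x * ∑ g ∈ T, if z < (g : ℕ) then (1 : ℝ) / g else 0 := by
        rw [mul_sum]
        refine sum_congr rfl fun g hg ↦ ?_
        rw [if_pos (mem_filter.1 hg).2, mul_one_div]
    _ ≤ x * recipTail G z := by
        gcongr
        exact hsummable.sum_le_tsum _ fun _ _ ↦ by split_ifs <;> positivity

end Multiples

section Truncation

variable (G : Set ℕ) (H : Finset ℕ)

def AsetUpTo (z : ℕ) : Set ℕ := {n | Odd n ∧ ∀ g ∈ G, g ≤ z → (g ∣ n ↔ g ∈ H)}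

variable {G H}

lemma Aset_subset_AsetUpTo (z : ℕ) : Aset G H ⊆ AsetUpTo G H z := by
  rintro n ⟨hodd, hdiv⟩
  exact ⟨hodd, fun g hg _ ↦ by rw [← Finset.mem_coe, ← hdiv]; exact ⟨fun h ↦ ⟨hg, h⟩, And.right⟩⟩

lemma antitone_AsetUpTo : Antitone (AsetUpTo G H) :=
  fun _ _ hzz' _ ⟨hodd, hdiv⟩ ↦ ⟨hodd, fun g hg hgz ↦ hdiv g hg (hgz.trans hzz')⟩

lemma periodic_mem_AsetUpTo {z m : ℕ} (h2m : 2 ∣ m) (hGm : ∀ g ∈ G, g ≤ z → g ∣ m) :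
    Periodic (· ∈ AsetUpTo G H z) m := fun n ↦ propext <| by
  have hodd : Odd (n + m) ↔ Odd n := Nat.odd_add.trans (iff_true_right (even_iff_two_dvd.2 h2m))
  simp only [AsetUpTo, Set.mem_ofPred_eq, hodd]
  refine and_congr_right fun _ ↦ forall₂_congr fun g hg ↦ imp_congr_right fun hgz ↦ ?_
  rw [Nat.dvd_add_left (hGm g hg hgz)]

lemma AsetUpTo_diff_Aset_subset (hH : ↑H ⊆ G) {z : ℕ} (hHz : ∀ h ∈ H, h ≤ z) :
    AsetUpTo G H z \ Aset G H ⊆ {n | ∃ g ∈ G, z < g ∧ g ∣ n} := by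
  rintro n ⟨⟨hodd, hdiv⟩, hnA⟩
  show ∃ g ∈ G, z < g ∧ g ∣ n
  by_contra! hsmall
  refine hnA ⟨hodd, Set.ext fun g ↦ ⟨fun ⟨hg, hgn⟩ ↦ ?_, fun hgH ↦ ⟨hH hgH, ?_⟩⟩⟩
  · exact (hdiv g hg (not_lt.1 fun hzg ↦ hsmall g hg hzg hgn)).1 hgn
  · exact (hdiv g (hH hgH) (hHz g hgH)).2 hgH

end Truncation

theorem hasDensity_Aset {G : Set ℕ} (hGpos : ∀ g ∈ G, 0 < g)
    (hsum : Summable fun g : G ↦ (1 : ℝ) / (g : ℕ)) {H : Finset ℕ} (hH : ↑H ⊆ G) :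
    ∃ d, HasDensity (Aset G H) d := by
  classical
  set m : ℕ → ℕ := fun z ↦ 2 * ∏ g ∈ (Ioc 0 z).filter (· ∈ G), g
  set β : ℕ → ℝ := fun z ↦ countIn (AsetUpTo G H z) (m z) / m z
  have hm (z : ℕ) : 0 < m z :=
    Nat.mul_pos two_pos (prod_pos fun g hg ↦ (mem_Ioc.1 (mem_filter.1 hg).1).1)
  have hB (z : ℕ) : HasDensity (AsetUpTo G H z) (β z) := by
    refine hasDensity_of_periodic_s16 (hm z)
      (periodic_mem_AsetUpTo (dvd_mul_right 2 _) fun g hg hgz ↦ ?_)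
    exact (Finset.dvd_prod_of_mem _ (mem_filter.2 ⟨mem_Ioc.2 ⟨hGpos g hg, hgz⟩, hg⟩)).mul_left 2
  have hβ : Antitone β := fun z z' hzz' ↦ (hB z').le_of_subset (antitone_AsetUpTo hzz') (hB z)
  refine ⟨⨅ z, β z, hasDensity_of_approx hB
    (tendsto_atTop_ciInf hβ ⟨0, Set.forall_mem_range.2 fun z ↦ (hB z).nonneg⟩)
    (tendsto_recipTail hsum) Aset_subset_AsetUpTo ?_⟩
  filter_upwards [eventually_ge_atTop (H.sup id)] with z hz x
  have hdiff := countIn_le_of_subset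
    (AsetUpTo_diff_Aset_subset hH fun h hh ↦ (le_sup (f := id) hh).trans hz) x
  calc (countIn (AsetUpTo G H z) x : ℝ)
      ≤ countIn (Aset G H) x + countIn (AsetUpTo G H z \ Aset G H) x := by
        exact_mod_cast countIn_le_add_countIn_diff _ _ x
    _ ≤ countIn (Aset G H) x + x * recipTail G z := by
        gcongr
        exact (Nat.cast_le.2 hdiff).trans (countIn_multiples_le hsum z x)

lemma Az_eq_Aset {G : Set ℕ} {H : Finset ℕ} {z : ℝ} (hz : ∀ h ∈ H, (h : ℝ) < z) :
    Az G H z = Aset G H := by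
  have hsep {n : ℕ} (hle : ∀ g ∈ G, g ∣ n → (g : ℝ) ≤ z) :
      {g ∈ G | (g : ℝ) ≤ z ∧ g ∣ n} = {g ∈ G | g ∣ n} :=
    Set.ext fun g ↦ ⟨fun ⟨hg, _, hgn⟩ ↦ ⟨hg, hgn⟩, fun ⟨hg, hgn⟩ ↦ ⟨hg, hle g hg hgn, hgn⟩⟩
  ext n
  refine ⟨fun ⟨hodd, hle, hdiv⟩ ↦ ⟨hodd, hsep hle ▸ hdiv⟩, fun ⟨hodd, hdiv⟩ ↦ ?_⟩
  have hle : ∀ g ∈ G, g ∣ n → (g : ℝ) ≤ z :=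
    fun g hg hgn ↦ (hz g (hdiv ▸ ⟨hg, hgn⟩ : g ∈ (H : Set ℕ))).le
  exact ⟨hodd, hle, (hsep hle).trans hdiv⟩

lemma upperDensity_empty : upperDensity ∅ = 0 := by
  simp [upperDensity, countIn]

/-- Let `G` be a set of positive integers with convergent reciprocal sum and `H ⊆ G`
finite. For `z > max H`: `d(A_z)` exists and is nonincreasing in `z`;
`A ⊆ A_{z'} ⊆ A_z` for `z' > z`; the upper density of `A_z \ A` is at most
`∑_{g ∈ G, g > z} 1/g`; and consequently `d(A)` exists and equals `lim_{z→∞} d(A_z)`. -/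
theorem stmt16 (G : Set ℕ) (hGpos : ∀ g ∈ G, 0 < g)
    (hsum : Summable fun g : G => (1 : ℝ) / ((g : ℕ) : ℝ))
    (H : Finset ℕ) (hH : ↑H ⊆ G) :
    ∃ δ : ℝ → ℝ,
      (∀ z : ℝ, (∀ h ∈ H, (h : ℝ) < z) → HasDensity (Az G H z) (δ z)) ∧
      (∀ z z' : ℝ, (∀ h ∈ H, (h : ℝ) < z) → z ≤ z' → δ z' ≤ δ z) ∧
      (∀ z z' : ℝ, (∀ h ∈ H, (h : ℝ) < z) → z < z' →
        Aset G H ⊆ Az G H z' ∧ Az G H z' ⊆ Az G H z) ∧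
      (∀ z : ℝ, (∀ h ∈ H, (h : ℝ) < z) →
        upperDensity (Az G H z \ Aset G H) ≤
          ∑' g : G, if z < ((g : ℕ) : ℝ) then (1 : ℝ) / ((g : ℕ) : ℝ) else 0) ∧
      ∃ dA : ℝ, HasDensity (Aset G H) dA ∧
        Filter.Tendsto δ Filter.atTop (nhds dA) := by
  obtain ⟨d, hd⟩ := hasDensity_Aset hGpos hsum hH
  refine ⟨fun _ ↦ d, fun z hz ↦ Az_eq_Aset hz ▸ hd, fun _ _ _ _ ↦ le_rfl,
    fun z z' hz hzz' ↦ ?_, fun z hz ↦ ?_, d, hd, tendsto_const_nhds⟩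
  · rw [Az_eq_Aset hz, Az_eq_Aset fun h hh ↦ (hz h hh).trans hzz']
    exact ⟨subset_rfl, subset_rfl⟩
  · rw [Az_eq_Aset hz, Set.sdiff_self, upperDensity_empty]
    exact tsum_nonneg fun _ ↦ by split_ifs <;> positivity
end
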